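/- Define f(t) = 2e^{-t²/2} + e^{-t²} - 3·erfc(t/√2) for t ≥ 0, where erfc(u) = (2/√π)∫_u^∞ e^{-s²} ds. Then f(t) > 0 for all t > 0. -/

import Mathlib

/-!
Write `f(t) = 2e^{-t²/2} + e^{-t²} - 3 erfc(t/√2)`. Then `f(0) = 0`, `f(t) → 0` as `t → ∞`, and
`f'(t) = e^{-t²/2} (3√(2/π) - 2t(1 + e^{-t²/2}))`, whose second factor is strictly decreasing.
So `f` first increases and then decreases, and a function with this shape vanishing at both
ends is positive in between.
-/

open MeasureTheory Real

noncomputable def erfc (u : ℝ) : ℝ :=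
  (2 / Real.sqrt Real.pi) * ∫ s in Set.Ioi u, Real.exp (-s ^ 2)

open Filter Topology

theorem pos_of_hasDerivAt_mul_strictAntiOn {f p g : ℝ → ℝ}
    (hf : ∀ t, 0 ≤ t → HasDerivAt f (p t * g t) t) (hp : ∀ t, 0 < t → 0 < p t)
    (hg : StrictAntiOn g (Set.Ioi 0)) (hf₀ : f 0 = 0) (hf_top : Tendsto f atTop (𝓝 0))
    {t : ℝ} (ht : 0 < t) : 0 < f t := by
  have hcont : ContinuousOn f (Set.Ici 0) := fun s hs =>
    (hf s hs).continuousAt.continuousWithinAt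
  rcases le_or_gt 0 (g t) with hgt | hgt
  · have hmono : StrictMonoOn f (Set.Icc 0 t) :=
      strictMonoOn_of_hasDerivWithinAt_pos (convex_Icc 0 t) (hcont.mono Set.Icc_subset_Ici_self)
        (fun s hs => (hf s (interior_subset hs).1).hasDerivWithinAt)
        (fun s hs => by
          rw [interior_Icc] at hs
          exact mul_pos (hp s hs.1) (hgt.trans_lt (hg hs.1 ht hs.2)))
    simpa [hf₀] using hmono ⟨le_rfl, ht.le⟩ ⟨ht.le, le_rfl⟩ ht
  · have hanti : StrictAntiOn f (Set.Ici t) :=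
      strictAntiOn_of_hasDerivWithinAt_neg (convex_Ici t) (hcont.mono (Set.Ici_subset_Ici.2 ht.le))
        (fun s hs => (hf s (ht.le.trans (interior_subset hs))).hasDerivWithinAt)
        (fun s hs => by
          rw [interior_Ici] at hs
          have hs₀ : 0 < s := ht.trans hs
          exact mul_neg_of_pos_of_neg (hp s hs₀) ((hg ht hs₀ hs).trans hgt))
    have hnonneg : 0 ≤ f (t + 1) :=
      le_of_tendsto hf_top <| eventually_atTop.2 ⟨t + 1, fun s hs =>
        hanti.antitoneOn (Set.mem_Ici.2 (by linarith)) (Set.mem_Ici.2 (by linarith)) hs⟩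
    exact hnonneg.trans_lt (hanti Set.self_mem_Ici (Set.mem_Ici.2 (by linarith)) (by linarith))

theorem integrableOn_exp_neg_sq_Ioi (u : ℝ) :
    IntegrableOn (fun s : ℝ => exp (-s ^ 2)) (Set.Ioi u) := by
  simpa using (integrable_exp_neg_mul_sq one_pos).integrableOn (s := Set.Ioi u)

theorem integral_exp_neg_sq_Ioi_zero : ∫ s in Set.Ioi (0 : ℝ), exp (-s ^ 2) = √π / 2 := by
  simpa using integral_gaussian_Ioi 1

theorem erfc_eq_one_sub_intervalIntegral (u : ℝ) :
    erfc u = 1 - 2 / √π * ∫ s in (0 : ℝ)..u, exp (-s ^ 2) := by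
  have hsplit := intervalIntegral.integral_interval_add_Ioi (integrableOn_exp_neg_sq_Ioi 0)
    (integrableOn_exp_neg_sq_Ioi u)
  have hπ : 0 < √π := sqrt_pos.2 pi_pos
  rw [integral_exp_neg_sq_Ioi_zero] at hsplit
  have hunit : 2 / √π * (√π / 2) = 1 := by field_simp
  rw [erfc]
  linear_combination (2 / √π) * hsplit + hunit

theorem erfc_zero : erfc 0 = 1 := by
  simp [erfc_eq_one_sub_intervalIntegral]

theorem hasDerivAt_erfc (u : ℝ) : HasDerivAt erfc (-(2 / √π * exp (-u ^ 2))) u := by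
  have h := ((by fun_prop : Continuous fun s : ℝ => exp (-s ^ 2)).integral_hasStrictDerivAt 0 u
    ).hasDerivAt.const_mul (2 / √π) |>.const_sub 1
  exact (funext erfc_eq_one_sub_intervalIntegral) ▸ h

theorem tendsto_erfc_atTop : Tendsto erfc atTop (𝓝 0) := by
  have h := ((intervalIntegral_tendsto_integral_Ioi 0 (integrableOn_exp_neg_sq_Ioi 0)
    tendsto_id).const_mul (2 / √π)).const_sub 1
  have hπ : 0 < √π := sqrt_pos.2 pi_pos
  rw [integral_exp_neg_sq_Ioi_zero, show 1 - 2 / √π * (√π / 2) = 0 by field_simp; ring] at h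
  simpa only [funext erfc_eq_one_sub_intervalIntegral, id] using h

theorem sq_sub_one_lt_exp_half (t : ℝ) : t ^ 2 - 1 < exp (t ^ 2 / 2) := by
  have h := quadratic_le_exp_of_nonneg (by positivity : 0 ≤ t ^ 2 / 2)
  nlinarith [sq_nonneg (t ^ 2 / 2 - 2)]

theorem strictMono_mul_one_add_exp_neg_sq_half :
    StrictMono fun t : ℝ => 2 * t * (1 + exp (-t ^ 2 / 2)) := by
  refine strictMono_of_hasDerivAt_pos (f' := fun t => 2 * (1 + exp (-t ^ 2 / 2) * (1 - t ^ 2)))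
    (fun t => ?_) (fun t => ?_)
  · refine (((hasDerivAt_id t).const_mul 2).mul
      (((hasDerivAt_pow 2 t).neg.div_const 2).exp.const_add 1)).congr_deriv ?_
    simp only [Pi.neg_apply, id]
    ring
  · have hinv : exp (-t ^ 2 / 2) * exp (t ^ 2 / 2) = 1 := by
      rw [← exp_add]; simp [neg_div]
    nlinarith [exp_pos (-t ^ 2 / 2), sq_sub_one_lt_exp_half t, hinv]

noncomputable def erfcGap (t : ℝ) : ℝ :=
  2 * exp (-t ^ 2 / 2) + exp (-t ^ 2) - 3 * erfc (t / √2)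

theorem hasDerivAt_erfcGap (t : ℝ) :
    HasDerivAt erfcGap (exp (-t ^ 2 / 2) * (3 * √(2 / π) - 2 * t * (1 + exp (-t ^ 2 / 2)))) t := by
  refine (((((hasDerivAt_pow 2 t).neg.div_const 2).exp.const_mul 2).add
    (hasDerivAt_pow 2 t).neg.exp).sub
    (((hasDerivAt_erfc (t / √2)).comp t ((hasDerivAt_id t).div_const √2)).const_mul 3)).congr_deriv ?_
  have hπ : (0 : ℝ) < √π := sqrt_pos.2 pi_pos
  have hsq : (t / √2) ^ 2 = t ^ 2 / 2 := by rw [div_pow, sq_sqrt zero_le_two]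
  have hexp : exp (-t ^ 2) = exp (-t ^ 2 / 2) * exp (-t ^ 2 / 2) := by rw [← exp_add]; ring_nf
  simp only [Pi.neg_apply, hsq, neg_div]
  rw [hexp, sqrt_div zero_le_two]
  field_simp
  linear_combination (-3) * sq_sqrt (zero_le_two (α := ℝ))

theorem erfcGap_zero : erfcGap 0 = 0 := by
  norm_num [erfcGap, erfc_zero]

theorem tendsto_erfcGap_atTop : Tendsto erfcGap atTop (𝓝 0) := by
  have hsq : Tendsto (fun t : ℝ => t ^ 2) atTop atTop := tendsto_pow_atTop two_ne_zero
  have h₁ : Tendsto (fun t : ℝ => exp (-t ^ 2 / 2)) atTop (𝓝 0) :=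
    (tendsto_exp_neg_atTop_nhds_zero.comp (hsq.atTop_div_const two_pos)).congr fun t => by
      simp [neg_div]
  have h₂ : Tendsto (fun t : ℝ => exp (-t ^ 2)) atTop (𝓝 0) :=
    tendsto_exp_neg_atTop_nhds_zero.comp hsq
  have h₃ : Tendsto (fun t : ℝ => erfc (t / √2)) atTop (𝓝 0) :=
    tendsto_erfc_atTop.comp (tendsto_id.atTop_div_const (by positivity))
  have h := ((h₁.const_mul 2).add h₂).sub (h₃.const_mul 3)
  rwa [mul_zero, add_zero, mul_zero, sub_zero] at h

/-- `f(t) = 2e^{-t²/2} + e^{-t²} - 3·erfc(t/√2)` is strictly positive for `t > 0`. -/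
theorem stmt_6 :
    ∀ t : ℝ, 0 < t →
      0 < 2 * Real.exp (-t ^ 2 / 2) + Real.exp (-t ^ 2) - 3 * erfc (t / Real.sqrt 2) := by
  intro t ht
  have hslope : StrictAnti fun t : ℝ => 3 * √(2 / π) - 2 * t * (1 + exp (-t ^ 2 / 2)) :=
    fun _ _ hst => sub_lt_sub_left (strictMono_mul_one_add_exp_neg_sq_half hst) _
  exact pos_of_hasDerivAt_mul_strictAntiOn (fun t _ => hasDerivAt_erfcGap t)
    (fun t _ => exp_pos _) (hslope.strictAntiOn _) erfcGap_zero tendsto_erfcGap_atTop ht
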